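/- arXiv:1911.13297 — 2 statements merged into one kernel-verified Lean document; each statement's English description precedes it below -/
import Mathlib

section
/- The complete graph K_3 has first chromatic symmetric homology in q-degree zero isomorphic, as a ℂ[S_3]-module, to the irreducible Specht module S^{(2,1)}; equivalently, the kernel of the differential d_1 : C_1(K_3)|_{S^{(2,1)}} → C_0(K_3)|_{S^{(2,1)}} is one copy of S^{(2,1)} generated by v_{X_1}^{Y_1} + v_{X_2}^{Y_1} + v_{X_3}^{Y_1}. -/
open Equiv MonoidAlgebra
open scoped Classical

/-- A *numbering* of shape `μ ⊢ n`: a bijective filling of the cells of the Young diagram `μ`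
with the entries `Fin n` (representing `1, …, n`). -/
abbrev YNumbering (μ : YoungDiagram) (n : ℕ) := ↥μ.cells ≃ Fin n

namespace YNumbering

variable {μ : YoungDiagram} {n : ℕ}

/-- The action of `π ∈ S_n` on numberings: `(π • T) c = π (T c)`. -/
def perm (π : Equiv.Perm (Fin n)) (T : YNumbering μ n) : YNumbering μ n := T.trans π

/-- The row index of the cell of `T` containing the entry `i`. -/
def rowFn (T : YNumbering μ n) (i : Fin n) : ℕ := ((T.symm i : ℕ × ℕ)).1

/-- The column index of the cell of `T` containing the entry `i`. -/
def colFn (T : YNumbering μ n) (i : Fin n) : ℕ := ((T.symm i : ℕ × ℕ)).2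

/-- The row group `R(T)`: permutations permuting the entries within each row of `T`. -/
def rowGroup (T : YNumbering μ n) : Subgroup (Equiv.Perm (Fin n)) where
  carrier := {π | ∀ i, T.rowFn (π i) = T.rowFn i}
  one_mem' := fun _ => rfl
  mul_mem' := by
    intro a b ha hb i
    rw [Equiv.Perm.mul_apply, ha, hb]
  inv_mem' := by
    intro a ha i
    have h := ha (a⁻¹ i)
    rw [show a (a⁻¹ i) = i from a.apply_symm_apply i] at h
    exact h.symm

/-- The column group `C(T)`: permutations permuting the entries within each column of `T`. -/
def colGroup (T : YNumbering μ n) : Subgroup (Equiv.Perm (Fin n)) where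
  carrier := {π | ∀ i, T.colFn (π i) = T.colFn i}
  one_mem' := fun _ => rfl
  mul_mem' := by
    intro a b ha hb i
    rw [Equiv.Perm.mul_apply, ha, hb]
  inv_mem' := by
    intro a ha i
    have h := ha (a⁻¹ i)
    rw [show a (a⁻¹ i) = i from a.apply_symm_apply i] at h
    exact h.symm

/-- The Young symmetrizer `a_T = Σ_{ρ ∈ R(T)} ρ` in the group algebra `R[S_n]`. -/
noncomputable def aElt (R : Type*) [CommRing R] (T : YNumbering μ n) :
    MonoidAlgebra R (Equiv.Perm (Fin n)) :=
  ∑ ρ : T.rowGroup, MonoidAlgebra.single (ρ : Equiv.Perm (Fin n)) (1 : R)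

/-- The Young symmetrizer `b_T = Σ_{ζ ∈ C(T)} sgn(ζ)·ζ` in the group algebra `R[S_n]`. -/
noncomputable def bElt (R : Type*) [CommRing R] (T : YNumbering μ n) :
    MonoidAlgebra R (Equiv.Perm (Fin n)) :=
  ∑ ζ : T.colGroup, MonoidAlgebra.single (ζ : Equiv.Perm (Fin n))
    (((Equiv.Perm.sign (ζ : Equiv.Perm (Fin n)) : ℤ) : R))

/-- The Young symmetrizer `c_T = b_T · a_T`. -/
noncomputable def cElt (R : Type*) [CommRing R] (T : YNumbering μ n) :
    MonoidAlgebra R (Equiv.Perm (Fin n)) :=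
  bElt R T * aElt R T

/-- `σ_{T,S}` : the unique permutation with `σ_{T,S} · T = S`. -/
def sigmaPerm (T S : YNumbering μ n) : Equiv.Perm (Fin n) := T.symm.trans S

/-- `v_T^S = σ_{T,S} · b_T · a_T` in the group algebra. -/
noncomputable def vElt (R : Type*) [CommRing R] (T S : YNumbering μ n) :
    MonoidAlgebra R (Equiv.Perm (Fin n)) :=
  MonoidAlgebra.single (sigmaPerm T S) (1 : R) * cElt R T

end YNumbering

/-- The Young diagram of shape `(2,1)`. -/
def mu21 : YoungDiagram := YoungDiagram.ofRowLens [2, 1] (by decide)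

/-- The sum map `d₁ : C_1(K_3)|_{S^{(2,1)}} → C_0(K_3)|_{S^{(2,1)}}`, realised on the ambient
free module `A³` (with `A = ℂ[S_3]`) as the signed sum of the inclusions of the three
one-edge permutation modules into `ℂ[S_3]`. -/
noncomputable def sumMap (A : Type*) [Ring A] : (A × A × A) →ₗ[A] A :=
  LinearMap.fst A A (A × A) +
    (LinearMap.fst A A A).comp (LinearMap.snd A A (A × A)) +
    (LinearMap.snd A A A).comp (LinearMap.snd A A (A × A))

namespace K3aux

noncomputable section

abbrev G3 := Equiv.Perm (Fin 3)
abbrev A3 := MonoidAlgebra ℂ G3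

def S (σ : G3) : A3 := MonoidAlgebra.single σ 1

def pa : G3 := Equiv.swap 0 1
def pb : G3 := Equiv.swap 0 2
def pd : G3 := Equiv.swap 1 2
def pc : G3 := pa * pd
def pc2 : G3 := pd * pa

lemma t_pa_pa : pa * pa = 1 := by decide
lemma t_pa_pb : pa * pb = pc2 := by decide
lemma t_pa_pd : pa * pd = pc := by decide
lemma t_pa_pc : pa * pc = pd := by decide
lemma t_pa_pc2 : pa * pc2 = pb := by decide
lemma t_pb_pa : pb * pa = pc := by decide
lemma t_pb_pb : pb * pb = 1 := by decide
lemma t_pb_pd : pb * pd = pc2 := by decide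
lemma t_pb_pc : pb * pc = pa := by decide
lemma t_pb_pc2 : pb * pc2 = pd := by decide
lemma t_pd_pa : pd * pa = pc2 := by decide
lemma t_pd_pb : pd * pb = pc := by decide
lemma t_pd_pd : pd * pd = 1 := by decide
lemma t_pd_pc : pd * pc = pb := by decide
lemma t_pd_pc2 : pd * pc2 = pa := by decide
lemma t_pc_pa : pc * pa = pb := by decide
lemma t_pc_pb : pc * pb = pd := by decide
lemma t_pc_pd : pc * pd = pa := by decide
lemma t_pc_pc : pc * pc = pc2 := by decide
lemma t_pc_pc2 : pc * pc2 = 1 := by decide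
lemma t_pc2_pa : pc2 * pa = pd := by decide
lemma t_pc2_pb : pc2 * pb = pa := by decide
lemma t_pc2_pd : pc2 * pd = pb := by decide
lemma t_pc2_pc : pc2 * pc = 1 := by decide
lemma t_pc2_pc2 : pc2 * pc2 = pc := by decide

lemma mulS (σ τ : G3) : S σ * S τ = S (σ * τ) := by
  simp [S, MonoidAlgebra.single_mul_single]

lemma S_one : S 1 = 1 := (MonoidAlgebra.one_def).symm

lemma smulS (σ : G3) (r : ℂ) : MonoidAlgebra.single σ r = r • S σ := by
  simp [S, Finsupp.smul_single]

/-- canonical forms -/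
def E₁ : A3 := S 1 + S pa - S pb - S pc
def E₂ : A3 := S pd + S pc - S pc2 - S pa
def E₃ : A3 := S pc2 + S pb - S pd - S 1
def P : A3 := (3 : ℂ)⁻¹ • (S 1 + S pd + (2:ℂ) • S pa - S pc)

lemma cert_sum : E₁ + E₂ + E₃ = 0 := by
  unfold E₁ E₂ E₃; abel

lemma cert_E2 : E₂ = E₁ * S pd := by
  unfold E₁ E₂
  simp only [add_mul, sub_mul, mulS, one_mul, t_pa_pd, t_pb_pd, t_pc_pd]
  try abel

lemma cert_P1 : E₁ * P = E₁ := by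
  unfold E₁ P
  simp only [mul_smul_comm, smul_mul_assoc, mul_add, mul_sub, add_mul, sub_mul, mulS, one_mul,
    mul_one, t_pa_pa, t_pa_pb, t_pa_pd, t_pa_pc, t_pa_pc2, t_pb_pa, t_pb_pb, t_pb_pd, t_pb_pc,
    t_pb_pc2, t_pd_pa, t_pd_pb, t_pd_pd, t_pd_pc, t_pd_pc2, t_pc_pa, t_pc_pb, t_pc_pd, t_pc_pc,
    t_pc_pc2, t_pc2_pa, t_pc2_pb, t_pc2_pd, t_pc2_pc, t_pc2_pc2]
  try module

lemma cert_P2 : E₂ * P = 0 := by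
  rw [cert_E2]
  unfold E₁ P
  simp only [mul_smul_comm, smul_mul_assoc, mul_add, mul_sub, add_mul, sub_mul, mulS, one_mul,
    mul_one, t_pa_pa, t_pa_pb, t_pa_pd, t_pa_pc, t_pa_pc2, t_pb_pa, t_pb_pb, t_pb_pd, t_pb_pc,
    t_pb_pc2, t_pd_pa, t_pd_pb, t_pd_pd, t_pd_pc, t_pd_pc2, t_pc_pa, t_pc_pb, t_pc_pd, t_pc_pc,
    t_pc_pc2, t_pc2_pa, t_pc2_pb, t_pc2_pd, t_pc2_pc, t_pc2_pc2]
  try module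

end

open YNumbering in
lemma mem_rowGroup {μ : YoungDiagram} {n : ℕ} {T : YNumbering μ n} {g : Equiv.Perm (Fin n)} :
    g ∈ T.rowGroup ↔ ∀ i, T.rowFn (g i) = T.rowFn i := Iff.rfl

open YNumbering in
lemma mem_colGroup {μ : YoungDiagram} {n : ℕ} {T : YNumbering μ n} {g : Equiv.Perm (Fin n)} :
    g ∈ T.colGroup ↔ ∀ i, T.colFn (g i) = T.colFn i := Iff.rfl

lemma sum_pair_subtype {M : Type*} [AddCommMonoid M] {p : G3 → Prop} [Fintype (Subtype p)]
    {x y : G3} (hxy : x ≠ y) (h : ∀ g, p g ↔ g = x ∨ g = y) (f : G3 → M) :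
    ∑ g : Subtype p, f g = f x + f y := by
  rw [← Finset.sum_subtype ({x, y} : Finset G3) (fun g => by simp [h g]) f,
    Finset.sum_pair hxy]

lemma aElt_eq {μ : YoungDiagram} {T : YNumbering μ 3} {x y : G3} (hxy : x ≠ y)
    (h : ∀ g, g ∈ T.rowGroup ↔ g = x ∨ g = y) :
    YNumbering.aElt ℂ T = S x + S y := by
  have h2 := sum_pair_subtype (M := A3) hxy h (fun g => MonoidAlgebra.single g (1:ℂ))
  unfold YNumbering.aElt
  exact h2

lemma bElt_eq {μ : YoungDiagram} {T : YNumbering μ 3} {x y : G3} (hxy : x ≠ y)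
    (h : ∀ g, g ∈ T.colGroup ↔ g = x ∨ g = y)
    (hsx : Equiv.Perm.sign x = 1) (hsy : Equiv.Perm.sign y = -1) :
    YNumbering.bElt ℂ T = S x - S y := by
  have h2 := sum_pair_subtype (M := A3) hxy h
    (fun g => MonoidAlgebra.single g (((Equiv.Perm.sign g : ℤ)) : ℂ))
  unfold YNumbering.bElt
  rw [h2, hsx, hsy]
  simp only [S, sub_eq_add_neg, ← Finsupp.single_neg]
  norm_num

lemma sumMap_apply (x : A3 × A3 × A3) : sumMap A3 x = x.1 + x.2.1 + x.2.2 := rfl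

end K3aux
set_option maxHeartbeats 2000000 in
/-- For the triangle `K_3` (entries `1,2,3` encoded as `0,1,2 : Fin 3`), with the numberings
`X₁ = [[1,2],[3]]`, `X₂ = [[1,3],[2]]`, `X₃ = [[2,3],[1]]` of shape `(2,1)` attached to its
three one-edge spanning subgraphs and `Y₁ = X₁`, the kernel of the differential
`d₁ : C_1(K_3)|_{S^{(2,1)}} → C_0(K_3)|_{S^{(2,1)}}` — that is, the intersection of the
restricted chain module spanned by `v_{X₁}^{Y₁}, v_{X₂}^{Y₁}, v_{X₃}^{Y₁}` with the kernel of
the sum-of-inclusions map — is exactly one copy of the Specht module `S^{(2,1)}` generated by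
`v_{X₁}^{Y₁} + v_{X₂}^{Y₁} + v_{X₃}^{Y₁}`; in particular `H_1(K_3; ℂ)` in `q`-degree zero is
isomorphic, as a `ℂ[S_3]`-module, to the Specht module `S^{(2,1)} = ℂ[S_3]·c_{Y₁}`. -/
theorem K3_first_homology
    (X₁ X₂ X₃ : YNumbering mu21 3)
    (h00 : ((0, 0) : ℕ × ℕ) ∈ mu21.cells) (h01 : ((0, 1) : ℕ × ℕ) ∈ mu21.cells)
    (h10 : ((1, 0) : ℕ × ℕ) ∈ mu21.cells)
    (hX₁ : X₁ ⟨(0, 0), h00⟩ = 0 ∧ X₁ ⟨(0, 1), h01⟩ = 1 ∧ X₁ ⟨(1, 0), h10⟩ = 2)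
    (hX₂ : X₂ ⟨(0, 0), h00⟩ = 0 ∧ X₂ ⟨(0, 1), h01⟩ = 2 ∧ X₂ ⟨(1, 0), h10⟩ = 1)
    (hX₃ : X₃ ⟨(0, 0), h00⟩ = 1 ∧ X₃ ⟨(0, 1), h01⟩ = 2 ∧ X₃ ⟨(1, 0), h10⟩ = 0) :
    (Submodule.span (MonoidAlgebra ℂ (Equiv.Perm (Fin 3)))
          {((YNumbering.vElt ℂ X₁ X₁, 0, 0) :
              MonoidAlgebra ℂ (Equiv.Perm (Fin 3)) × MonoidAlgebra ℂ (Equiv.Perm (Fin 3)) ×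
                MonoidAlgebra ℂ (Equiv.Perm (Fin 3))),
            (0, YNumbering.vElt ℂ X₂ X₁, 0), (0, 0, YNumbering.vElt ℂ X₃ X₁)} ⊓
        LinearMap.ker (sumMap (MonoidAlgebra ℂ (Equiv.Perm (Fin 3)))) =
      Submodule.span (MonoidAlgebra ℂ (Equiv.Perm (Fin 3)))
        {(YNumbering.vElt ℂ X₁ X₁, YNumbering.vElt ℂ X₂ X₁, YNumbering.vElt ℂ X₃ X₁)}) ∧
    Nonempty
      ((Submodule.span (MonoidAlgebra ℂ (Equiv.Perm (Fin 3)))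
          {((YNumbering.vElt ℂ X₁ X₁, YNumbering.vElt ℂ X₂ X₁, YNumbering.vElt ℂ X₃ X₁) :
              MonoidAlgebra ℂ (Equiv.Perm (Fin 3)) × MonoidAlgebra ℂ (Equiv.Perm (Fin 3)) ×
                MonoidAlgebra ℂ (Equiv.Perm (Fin 3)))}) ≃ₗ[MonoidAlgebra ℂ (Equiv.Perm (Fin 3))]
        (Submodule.span (MonoidAlgebra ℂ (Equiv.Perm (Fin 3)))
          {YNumbering.cElt ℂ X₁})) := by
  classical
  obtain ⟨hX₁a, hX₁b, hX₁c⟩ := hX₁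
  obtain ⟨hX₂a, hX₂b, hX₂c⟩ := hX₂
  obtain ⟨hX₃a, hX₃b, hX₃c⟩ := hX₃
  open K3aux in
  have sym : ∀ (T : YNumbering mu21 3) (cell : ↥mu21.cells) (i : Fin 3),
      T cell = i → T.symm i = cell := fun T cell i h => by rw [← h, Equiv.symm_apply_apply]
  -- X₁ block
  have s10 := sym X₁ _ _ hX₁a
  have s11 := sym X₁ _ _ hX₁b
  have s12 := sym X₁ _ _ hX₁c
  have hrow1 : X₁.rowFn = ![0, 0, 1] := by
    funext i; fin_cases i <;> simp [YNumbering.rowFn, s10, s11, s12]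
  have hcol1 : X₁.colFn = ![0, 1, 0] := by
    funext i; fin_cases i <;> simp [YNumbering.colFn, s10, s11, s12]
  have ha1 : YNumbering.aElt ℂ X₁ = K3aux.S 1 + K3aux.S K3aux.pa :=
    K3aux.aElt_eq (by decide) (by
      intro g; rw [K3aux.mem_rowGroup, hrow1]; revert g; decide)
  have hb1 : YNumbering.bElt ℂ X₁ = K3aux.S 1 - K3aux.S K3aux.pb :=
    K3aux.bElt_eq (by decide) (by
      intro g; rw [K3aux.mem_colGroup, hcol1]; revert g; decide)
      (by simp) (Equiv.Perm.sign_swap (by decide))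
  have hcElt1 : YNumbering.cElt ℂ X₁ = K3aux.E₁ := by
    rw [YNumbering.cElt, ha1, hb1]
    unfold K3aux.E₁
    simp only [mul_add, mul_sub, add_mul, sub_mul, K3aux.mulS, one_mul, mul_one, K3aux.t_pb_pa]
    abel
  have hsig1 : YNumbering.sigmaPerm X₁ X₁ = 1 := by
    rw [YNumbering.sigmaPerm, Equiv.symm_trans_self]; rfl
  have hv1 : YNumbering.vElt ℂ X₁ X₁ = K3aux.E₁ := by
    rw [YNumbering.vElt, hsig1, hcElt1,
      show (MonoidAlgebra.single (1 : Equiv.Perm (Fin 3)) (1 : ℂ)) = 1 from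
        MonoidAlgebra.one_def.symm, one_mul]
  -- X₂ block
  have s20 := sym X₂ _ _ hX₂a
  have s21 := sym X₂ _ _ hX₂c
  have s22 := sym X₂ _ _ hX₂b
  have hrow2 : X₂.rowFn = ![0, 1, 0] := by
    funext i; fin_cases i <;> simp [YNumbering.rowFn, s20, s21, s22]
  have hcol2 : X₂.colFn = ![0, 0, 1] := by
    funext i; fin_cases i <;> simp [YNumbering.colFn, s20, s21, s22]
  have ha2 : YNumbering.aElt ℂ X₂ = K3aux.S 1 + K3aux.S K3aux.pb :=
    K3aux.aElt_eq (by decide) (by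
      intro g; rw [K3aux.mem_rowGroup, hrow2]; revert g; decide)
  have hb2 : YNumbering.bElt ℂ X₂ = K3aux.S 1 - K3aux.S K3aux.pa :=
    K3aux.bElt_eq (by decide) (by
      intro g; rw [K3aux.mem_colGroup, hcol2]; revert g; decide)
      (by simp) (Equiv.Perm.sign_swap (by decide))
  have hsig2 : YNumbering.sigmaPerm X₂ X₁ = K3aux.pd := by
    have h0 : (YNumbering.sigmaPerm X₂ X₁) 0 = 0 := by
      rw [YNumbering.sigmaPerm, Equiv.trans_apply, s20, hX₁a]
    have h1 : (YNumbering.sigmaPerm X₂ X₁) 1 = 2 := by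
      rw [YNumbering.sigmaPerm, Equiv.trans_apply, s21, hX₁c]
    have h2 : (YNumbering.sigmaPerm X₂ X₁) 2 = 1 := by
      rw [YNumbering.sigmaPerm, Equiv.trans_apply, s22, hX₁b]
    apply Equiv.ext; intro i
    fin_cases i
    · exact h0.trans (by decide)
    · exact h1.trans (by decide)
    · exact h2.trans (by decide)
  have hv2 : YNumbering.vElt ℂ X₂ X₁ = K3aux.E₂ := by
    rw [YNumbering.vElt, hsig2, YNumbering.cElt, ha2, hb2]
    unfold K3aux.E₂
    rw [show (MonoidAlgebra.single (K3aux.pd) (1 : ℂ)) = K3aux.S K3aux.pd from rfl]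
    simp only [mul_add, mul_sub, add_mul, sub_mul, K3aux.mulS, one_mul, mul_one,
      K3aux.t_pa_pb, K3aux.t_pd_pb, K3aux.t_pd_pa, K3aux.t_pd_pc2]
    abel
  -- X₃ block
  have s30 := sym X₃ _ _ hX₃c
  have s31 := sym X₃ _ _ hX₃a
  have s32 := sym X₃ _ _ hX₃b
  have hrow3 : X₃.rowFn = ![1, 0, 0] := by
    funext i; fin_cases i <;> simp [YNumbering.rowFn, s30, s31, s32]
  have hcol3 : X₃.colFn = ![0, 0, 1] := by
    funext i; fin_cases i <;> simp [YNumbering.colFn, s30, s31, s32]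
  have ha3 : YNumbering.aElt ℂ X₃ = K3aux.S 1 + K3aux.S K3aux.pd :=
    K3aux.aElt_eq (by decide) (by
      intro g; rw [K3aux.mem_rowGroup, hrow3]; revert g; decide)
  have hb3 : YNumbering.bElt ℂ X₃ = K3aux.S 1 - K3aux.S K3aux.pa :=
    K3aux.bElt_eq (by decide) (by
      intro g; rw [K3aux.mem_colGroup, hcol3]; revert g; decide)
      (by simp) (Equiv.Perm.sign_swap (by decide))
  have hsig3 : YNumbering.sigmaPerm X₃ X₁ = K3aux.pc2 := by
    have h0 : (YNumbering.sigmaPerm X₃ X₁) 0 = 2 := by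
      rw [YNumbering.sigmaPerm, Equiv.trans_apply, s30, hX₁c]
    have h1 : (YNumbering.sigmaPerm X₃ X₁) 1 = 0 := by
      rw [YNumbering.sigmaPerm, Equiv.trans_apply, s31, hX₁a]
    have h2 : (YNumbering.sigmaPerm X₃ X₁) 2 = 1 := by
      rw [YNumbering.sigmaPerm, Equiv.trans_apply, s32, hX₁b]
    apply Equiv.ext; intro i
    fin_cases i
    · exact h0.trans (by decide)
    · exact h1.trans (by decide)
    · exact h2.trans (by decide)
  have hv3 : YNumbering.vElt ℂ X₃ X₁ = K3aux.E₃ := by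
    rw [YNumbering.vElt, hsig3, YNumbering.cElt, ha3, hb3]
    unfold K3aux.E₃
    rw [show (MonoidAlgebra.single (K3aux.pc2) (1 : ℂ)) = K3aux.S K3aux.pc2 from rfl]
    simp only [mul_add, mul_sub, add_mul, sub_mul, K3aux.mulS, one_mul, mul_one,
      K3aux.t_pa_pd, K3aux.t_pc2_pd, K3aux.t_pc2_pa, K3aux.t_pc2_pc]
    abel
  rw [hv1, hv2, hv3, hcElt1]
  have hE3 : K3aux.E₃ = -K3aux.E₁ - K3aux.E₂ := by
    have h := K3aux.cert_sum
    calc K3aux.E₃ = (K3aux.E₁ + K3aux.E₂ + K3aux.E₃) - K3aux.E₁ - K3aux.E₂ := by abel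
    _ = -K3aux.E₁ - K3aux.E₂ := by rw [h]; abel
  constructor
  · apply le_antisymm
    · intro v hv
      rw [Submodule.mem_inf] at hv
      obtain ⟨hsp, hker⟩ := hv
      rw [Submodule.mem_span_insert] at hsp
      obtain ⟨a, z, hz, rfl⟩ := hsp
      rw [Submodule.mem_span_insert] at hz
      obtain ⟨b, z', hz', rfl⟩ := hz
      rw [Submodule.mem_span_singleton] at hz'
      obtain ⟨c, rfl⟩ := hz'
      have hker' : a * K3aux.E₁ + b * K3aux.E₂ + c * K3aux.E₃ = 0 := by
        have := LinearMap.mem_ker.1 hker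
        rw [K3aux.sumMap_apply] at this
        simpa [smul_eq_mul, add_assoc] using this
      have key : (a - c) * K3aux.E₁ + (b - c) * K3aux.E₂ = 0 := by
        calc (a - c) * K3aux.E₁ + (b - c) * K3aux.E₂
            = (a * K3aux.E₁ + b * K3aux.E₂ + c * (-K3aux.E₁ - K3aux.E₂))
              - c * (K3aux.E₁ + K3aux.E₂ + (-K3aux.E₁ - K3aux.E₂)) := by noncomm_ring
        _ = 0 := by rw [← hE3, hker', K3aux.cert_sum, mul_zero, sub_zero]
      have hA1 : (a - c) * K3aux.E₁ = 0 := by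
        have hmul := congrArg (fun t => t * K3aux.P) key
        simpa only [add_mul, zero_mul, mul_assoc, K3aux.cert_P1, K3aux.cert_P2,
          mul_zero, add_zero] using hmul
      have hB1 : (b - c) * K3aux.E₂ = 0 := by
        have := key; rw [hA1, zero_add] at this; exact this
      rw [sub_mul, sub_eq_zero] at hA1 hB1
      rw [Submodule.mem_span_singleton]
      refine ⟨c, ?_⟩
      have : a • ((K3aux.E₁ : K3aux.A3), (0 : K3aux.A3), (0 : K3aux.A3)) + (b • ((0 : K3aux.A3), (K3aux.E₂ : K3aux.A3), (0 : K3aux.A3))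
          + c • ((0 : K3aux.A3), (0 : K3aux.A3), (K3aux.E₃ : K3aux.A3))) = (a * K3aux.E₁, b * K3aux.E₂, c * K3aux.E₃) := by
        simp [Prod.ext_iff, smul_eq_mul]
      rw [this]
      have hcw : c • ((K3aux.E₁, K3aux.E₂, K3aux.E₃) : K3aux.A3 × K3aux.A3 × K3aux.A3)
          = (c * K3aux.E₁, c * K3aux.E₂, c * K3aux.E₃) := by
        simp [Prod.ext_iff, smul_eq_mul]
      rw [hcw, hA1, hB1]
    · rw [Submodule.span_le, Set.singleton_subset_iff]
      constructor
      · have hsum : ((K3aux.E₁, K3aux.E₂, K3aux.E₃) : K3aux.A3 × K3aux.A3 × K3aux.A3)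
            = (K3aux.E₁, 0, 0) + ((0, K3aux.E₂, 0) + (0, 0, K3aux.E₃)) := by
          simp [Prod.ext_iff]
        rw [hsum]
        exact Submodule.add_mem _ (Submodule.subset_span (by simp))
          (Submodule.add_mem _ (Submodule.subset_span (by simp))
            (Submodule.subset_span (by simp)))
      · rw [SetLike.mem_coe, LinearMap.mem_ker, K3aux.sumMap_apply]
        exact K3aux.cert_sum
  · -- the isomorphism
    have hmem : ∀ x ∈ Submodule.span K3aux.A3 {(K3aux.E₁, K3aux.E₂, K3aux.E₃)}, (LinearMap.fst K3aux.A3 K3aux.A3 (K3aux.A3 × K3aux.A3)) x ∈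
        Submodule.span K3aux.A3 {K3aux.E₁} := by
      intro x hx
      obtain ⟨a, rfl⟩ := Submodule.mem_span_singleton.1 hx
      rw [map_smul]
      exact Submodule.smul_mem _ _ (Submodule.subset_span rfl)
    set f := (LinearMap.fst K3aux.A3 K3aux.A3 (K3aux.A3 × K3aux.A3)).restrict hmem with hf
    have hinj : Function.Injective f := by
      rw [← LinearMap.ker_eq_bot, eq_bot_iff]
      rintro ⟨x, hxw⟩ hx0
      obtain ⟨a, ha⟩ := Submodule.mem_span_singleton.1 hxw
      have hx1 : x.1 = 0 := by
        have := congrArg (Subtype.val) (LinearMap.mem_ker.1 hx0)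
        simpa [hf, LinearMap.restrict_apply] using this
      have hcomp : a • ((K3aux.E₁, K3aux.E₂, K3aux.E₃) : K3aux.A3 × K3aux.A3 × K3aux.A3) = (a * K3aux.E₁, a * K3aux.E₂, a * K3aux.E₃) := by
        simp [Prod.ext_iff, smul_eq_mul]
      have haE1 : a * K3aux.E₁ = 0 := by
        have h' := congrArg Prod.fst ha
        rw [hcomp] at h'
        simpa [hx1] using h'
      have haE2 : a * K3aux.E₂ = 0 := by
        rw [K3aux.cert_E2, ← mul_assoc, haE1, zero_mul]
      have haE3 : a * K3aux.E₃ = 0 := by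
        rw [hE3, mul_sub, mul_neg, haE1, haE2, neg_zero, zero_sub, neg_zero]
      have hx0' : x = 0 := by
        rw [← ha, hcomp, haE1, haE2, haE3]
        rfl
      simp [Submodule.mem_bot, hx0']
    have hsurj : Function.Surjective f := by
      rintro ⟨y, hy⟩
      obtain ⟨a, ha⟩ := Submodule.mem_span_singleton.1 hy
      have hmemw : a • ((K3aux.E₁, K3aux.E₂, K3aux.E₃) : K3aux.A3 × K3aux.A3 × K3aux.A3) ∈ Submodule.span K3aux.A3 {(K3aux.E₁, K3aux.E₂, K3aux.E₃)} :=
        Submodule.smul_mem _ _ (Submodule.subset_span rfl)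
      refine ⟨⟨a • ((K3aux.E₁, K3aux.E₂, K3aux.E₃) : K3aux.A3 × K3aux.A3 × K3aux.A3), hmemw⟩, ?_⟩
      apply Subtype.ext
      have h2 : ((f ⟨a • ((K3aux.E₁, K3aux.E₂, K3aux.E₃) : K3aux.A3 × K3aux.A3 × K3aux.A3), hmemw⟩ : ↥(Submodule.span K3aux.A3 {K3aux.E₁})) : K3aux.A3)
          = (LinearMap.fst K3aux.A3 K3aux.A3 (K3aux.A3 × K3aux.A3)) (a • ((K3aux.E₁, K3aux.E₂, K3aux.E₃) : K3aux.A3 × K3aux.A3 × K3aux.A3)) := by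
        rw [hf, LinearMap.restrict_apply]
      rw [h2]
      show (a • ((K3aux.E₁, K3aux.E₂, K3aux.E₃) : K3aux.A3 × K3aux.A3 × K3aux.A3)).1 = y
      have h1 : (a • ((K3aux.E₁, K3aux.E₂, K3aux.E₃) : K3aux.A3 × K3aux.A3 × K3aux.A3)).1 = a • K3aux.E₁ := rfl
      rw [h1, ha]
    exact ⟨LinearEquiv.ofBijective f ⟨hinj, hsurj⟩⟩
end

section
/- In ℤ[S_4], the element g = (e − (1 4))(e + (2 3) + (1 2 3))(e + (1 2))(e + (3 4)) equals v_{[[1,2,3],[4]]}^{Y} + v_{[[1,2,4],[3]]}^{Y}, where Y = [[1,2,3],[4]]; in particular g lies in the left ideal ℤ[S_4]·(e+(1 2))(e+(3 4)). -/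
open Equiv MonoidAlgebra
open scoped Classical

/-- The Young diagram of shape `(3,1)`. -/
def mu31 : YoungDiagram := YoungDiagram.ofRowLens [3, 1] (by decide)

private theorem MA.add_apply (f g : MonoidAlgebra ℤ (Equiv.Perm (Fin 4)))
    (x : Equiv.Perm (Fin 4)) : (f + g).coeff x = f.coeff x + g.coeff x := rfl

private theorem MA.sub_apply (f g : MonoidAlgebra ℤ (Equiv.Perm (Fin 4)))
    (x : Equiv.Perm (Fin 4)) : (f - g).coeff x = f.coeff x - g.coeff x := Finsupp.sub_apply _ _ _

private theorem MA.single_apply (a x : Equiv.Perm (Fin 4)) (b : ℤ) :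
    (MonoidAlgebra.single a b).coeff x = if a = x then b else 0 := Finsupp.single_apply

/-- In `ℤ[S_4]` (entries `1,2,3,4` encoded as `0,1,2,3 : Fin 4`, so that the cycle-notation
permutations are `(1 4) = swap 0 3`, `(2 3) = swap 1 2`, `(1 2 3) = swap 0 2 * swap 0 1`,
`(1 2) = swap 0 1`, `(3 4) = swap 2 3`), the element
`g = (e - (1 4))(e + (2 3) + (1 2 3))(e + (1 2))(e + (3 4))` equals
`v_{[[1,2,3],[4]]}^Y + v_{[[1,2,4],[3]]}^Y` where `Y = [[1,2,3],[4]]`; in particular `g` lies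
in the left ideal `ℤ[S_4]·(e + (1 2))(e + (3 4))`. -/
theorem garnir_element_shape_three_one
    (A B : YNumbering mu31 4)
    (h00 : ((0, 0) : ℕ × ℕ) ∈ mu31.cells) (h01 : ((0, 1) : ℕ × ℕ) ∈ mu31.cells)
    (h02 : ((0, 2) : ℕ × ℕ) ∈ mu31.cells) (h10 : ((1, 0) : ℕ × ℕ) ∈ mu31.cells)
    (hA : A ⟨(0, 0), h00⟩ = 0 ∧ A ⟨(0, 1), h01⟩ = 1 ∧ A ⟨(0, 2), h02⟩ = 2 ∧ A ⟨(1, 0), h10⟩ = 3)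
    (hB : B ⟨(0, 0), h00⟩ = 0 ∧ B ⟨(0, 1), h01⟩ = 1 ∧ B ⟨(0, 2), h02⟩ = 3 ∧ B ⟨(1, 0), h10⟩ = 2)
    (g : MonoidAlgebra ℤ (Equiv.Perm (Fin 4)))
    (hg : g = (1 - MonoidAlgebra.single (Equiv.swap (0 : Fin 4) 3) (1 : ℤ)) *
        (1 + MonoidAlgebra.single (Equiv.swap (1 : Fin 4) 2) (1 : ℤ) +
          MonoidAlgebra.single (Equiv.swap (0 : Fin 4) 2 * Equiv.swap (0 : Fin 4) 1) (1 : ℤ)) *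
        (1 + MonoidAlgebra.single (Equiv.swap (0 : Fin 4) 1) (1 : ℤ)) *
        (1 + MonoidAlgebra.single (Equiv.swap (2 : Fin 4) 3) (1 : ℤ))) :
    g = YNumbering.vElt ℤ A A + YNumbering.vElt ℤ B A ∧
    g ∈ Submodule.span (MonoidAlgebra ℤ (Equiv.Perm (Fin 4)))
        {(1 + MonoidAlgebra.single (Equiv.swap (0 : Fin 4) 1) (1 : ℤ)) *
          (1 + MonoidAlgebra.single (Equiv.swap (2 : Fin 4) 3) (1 : ℤ))} := by
  -- values of the inverse numberings
  have hA0 : A.symm 0 = ⟨(0,0), h00⟩ := A.symm_apply_eq.mpr hA.1.symm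
  have hA1 : A.symm 1 = ⟨(0,1), h01⟩ := A.symm_apply_eq.mpr hA.2.1.symm
  have hA2 : A.symm 2 = ⟨(0,2), h02⟩ := A.symm_apply_eq.mpr hA.2.2.1.symm
  have hA3 : A.symm 3 = ⟨(1,0), h10⟩ := A.symm_apply_eq.mpr hA.2.2.2.symm
  have hB0 : B.symm 0 = ⟨(0,0), h00⟩ := B.symm_apply_eq.mpr hB.1.symm
  have hB1 : B.symm 1 = ⟨(0,1), h01⟩ := B.symm_apply_eq.mpr hB.2.1.symm
  have hB2 : B.symm 2 = ⟨(1,0), h10⟩ := B.symm_apply_eq.mpr hB.2.2.2.symm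
  have hB3 : B.symm 3 = ⟨(0,2), h02⟩ := B.symm_apply_eq.mpr hB.2.2.1.symm
  -- row and column functions
  have hrA : A.rowFn = ![0,0,0,1] := by
    funext i; fin_cases i <;> simp [YNumbering.rowFn, hA0, hA1, hA2, hA3]
  have hcA : A.colFn = ![0,1,2,0] := by
    funext i; fin_cases i <;> simp [YNumbering.colFn, hA0, hA1, hA2, hA3]
  have hrB : B.rowFn = ![0,0,1,0] := by
    funext i; fin_cases i <;> simp [YNumbering.rowFn, hB0, hB1, hB2, hB3]
  have hcB : B.colFn = ![0,1,0,2] := by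
    funext i; fin_cases i <;> simp [YNumbering.colFn, hB0, hB1, hB2, hB3]
  -- the Young symmetrizer factors, explicitly
  have haA : YNumbering.aElt ℤ A =
      MonoidAlgebra.single (1 : Perm (Fin 4)) (1:ℤ) + (MonoidAlgebra.single (swap 0 1) 1 +
        (MonoidAlgebra.single (swap 0 2) 1 + (MonoidAlgebra.single (swap 1 2) 1 +
        (MonoidAlgebra.single (swap 0 2 * swap 0 1) 1 +
          MonoidAlgebra.single (swap 0 1 * swap 0 2) 1)))) := by
    have key : ∀ x : Perm (Fin 4), x ∈ ({1, swap 0 1, swap 0 2, swap 1 2,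
        swap 0 2 * swap 0 1, swap 0 1 * swap 0 2} : Finset (Perm (Fin 4))) ↔
        x ∈ A.rowGroup := by
      intro x
      show _ ↔ ∀ i, A.rowFn (x i) = A.rowFn i
      rw [hrA]; revert x; decide
    unfold YNumbering.aElt
    rw [← Finset.sum_subtype _ key (fun x => MonoidAlgebra.single x (1:ℤ))]
    rw [Finset.sum_insert (by decide), Finset.sum_insert (by decide),
      Finset.sum_insert (by decide), Finset.sum_insert (by decide),
      Finset.sum_insert (by decide), Finset.sum_singleton]
  have haB : YNumbering.aElt ℤ B =
      MonoidAlgebra.single (1 : Perm (Fin 4)) (1:ℤ) + (MonoidAlgebra.single (swap 0 1) 1 +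
        (MonoidAlgebra.single (swap 0 3) 1 + (MonoidAlgebra.single (swap 1 3) 1 +
        (MonoidAlgebra.single (swap 0 3 * swap 0 1) 1 +
          MonoidAlgebra.single (swap 0 1 * swap 0 3) 1)))) := by
    have key : ∀ x : Perm (Fin 4), x ∈ ({1, swap 0 1, swap 0 3, swap 1 3,
        swap 0 3 * swap 0 1, swap 0 1 * swap 0 3} : Finset (Perm (Fin 4))) ↔
        x ∈ B.rowGroup := by
      intro x
      show _ ↔ ∀ i, B.rowFn (x i) = B.rowFn i
      rw [hrB]; revert x; decide
    unfold YNumbering.aElt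
    rw [← Finset.sum_subtype _ key (fun x => MonoidAlgebra.single x (1:ℤ))]
    rw [Finset.sum_insert (by decide), Finset.sum_insert (by decide),
      Finset.sum_insert (by decide), Finset.sum_insert (by decide),
      Finset.sum_insert (by decide), Finset.sum_singleton]
  have hsgn1 : ((Equiv.Perm.sign (1 : Perm (Fin 4)) : ℤ) : ℤ) = 1 := by decide
  have hsgn03 : ((Equiv.Perm.sign (swap (0 : Fin 4) 3) : ℤ) : ℤ) = -1 := by decide
  have hsgn02 : ((Equiv.Perm.sign (swap (0 : Fin 4) 2) : ℤ) : ℤ) = -1 := by decide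
  have hbA : YNumbering.bElt ℤ A =
      MonoidAlgebra.single (1 : Perm (Fin 4)) (1:ℤ) +
        MonoidAlgebra.single (swap 0 3) (-1:ℤ) := by
    have key : ∀ x : Perm (Fin 4), x ∈ ({1, swap 0 3} : Finset (Perm (Fin 4))) ↔
        x ∈ A.colGroup := by
      intro x
      show _ ↔ ∀ i, A.colFn (x i) = A.colFn i
      rw [hcA]; revert x; decide
    unfold YNumbering.bElt
    simp only [Int.cast_id]
    rw [← Finset.sum_subtype _ key
      (fun x => MonoidAlgebra.single x ((Equiv.Perm.sign x : ℤ)))]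
    rw [Finset.sum_insert (by decide), Finset.sum_singleton, hsgn1, hsgn03]
  have hbB : YNumbering.bElt ℤ B =
      MonoidAlgebra.single (1 : Perm (Fin 4)) (1:ℤ) +
        MonoidAlgebra.single (swap 0 2) (-1:ℤ) := by
    have key : ∀ x : Perm (Fin 4), x ∈ ({1, swap 0 2} : Finset (Perm (Fin 4))) ↔
        x ∈ B.colGroup := by
      intro x
      show _ ↔ ∀ i, B.colFn (x i) = B.colFn i
      rw [hcB]; revert x; decide
    unfold YNumbering.bElt
    simp only [Int.cast_id]
    rw [← Finset.sum_subtype _ key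
      (fun x => MonoidAlgebra.single x ((Equiv.Perm.sign x : ℤ)))]
    rw [Finset.sum_insert (by decide), Finset.sum_singleton, hsgn1, hsgn02]
  -- the permutations σ
  have hsAA : YNumbering.sigmaPerm A A = 1 := Equiv.symm_trans_self A
  have hsBA : YNumbering.sigmaPerm B A = swap 2 3 := by
    have e0 : YNumbering.sigmaPerm B A 0 = 0 := by
      show A (B.symm 0) = 0; rw [hB0]; exact hA.1
    have e1 : YNumbering.sigmaPerm B A 1 = 1 := by
      show A (B.symm 1) = 1; rw [hB1]; exact hA.2.1
    have e2 : YNumbering.sigmaPerm B A 2 = 3 := by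
      show A (B.symm 2) = 3; rw [hB2]; exact hA.2.2.2
    have e3 : YNumbering.sigmaPerm B A 3 = 2 := by
      show A (B.symm 3) = 2; rw [hB3]; exact hA.2.2.1
    ext i
    fin_cases i <;> simp_all [Equiv.swap_apply_def]
  constructor
  · rw [hg, YNumbering.vElt, YNumbering.vElt, YNumbering.cElt, YNumbering.cElt,
      hsAA, hsBA, haA, haB, hbA, hbB]
    simp only [add_mul, mul_add, sub_mul, mul_sub, one_mul, mul_one,
      MonoidAlgebra.single_mul_single]
    simp only [MonoidAlgebra.one_def]
    refine MonoidAlgebra.coeff_injective (Finsupp.ext fun σ => ?_)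
    simp only [MA.add_apply, MA.sub_apply, MA.single_apply]
    revert σ; decide
  · rw [hg, mul_assoc]
    have hmem : ((1 : MonoidAlgebra ℤ (Perm (Fin 4))) +
        MonoidAlgebra.single (swap 0 1) 1) * (1 + MonoidAlgebra.single (swap 2 3) 1) ∈
        Submodule.span (MonoidAlgebra ℤ (Equiv.Perm (Fin 4)))
        {(1 + MonoidAlgebra.single (Equiv.swap (0 : Fin 4) 1) (1 : ℤ)) *
          (1 + MonoidAlgebra.single (Equiv.swap (2 : Fin 4) 3) (1 : ℤ))} :=
      Submodule.subset_span rfl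
    have := Submodule.smul_mem _ ((1 - MonoidAlgebra.single (swap (0:Fin 4) 3) (1:ℤ)) *
        (1 + MonoidAlgebra.single (swap 1 2) 1 +
          MonoidAlgebra.single (swap 0 2 * swap 0 1) 1)) hmem
    rwa [smul_eq_mul] at this
end
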